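/- arXiv:2404.17002 — 3 statements merged into one kernel-verified Lean document; each statement's English description precedes it below -/
import Mathlib

section
/- Let A, B, C be finite-dimensional algebras over a field k, let M be a radically symmetric A-B bimodule and N a radically symmetric B-C bimodule. Then the A-C bimodule M ⊗_B N is radically symmetric; more precisely rad(A)·(M ⊗_B N) = (rad(A)·M) ⊗_B N = M ⊗_B (rad(B)·N) = M ⊗_B (N·rad(C)) = (M ⊗_B N)·rad(C). -/
open MulOpposite

/-- The subspace of a bimodule spanned by products `a • m` with `a` in a given subspace of the
algebra acting on the left and `m` in a given subspace of the module. -/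
def Submodule.lprod {k A M : Type*} [Field k] [Ring A] [Algebra k A]
    [AddCommGroup M] [Module k M] [Module A M] [IsScalarTower k A M]
    (P : Submodule k A) (N : Submodule k M) : Submodule k M :=
  Submodule.span k {x | ∃ a ∈ P, ∃ m ∈ N, x = a • m}

/-- The subspace of a bimodule spanned by products `m • b` with `b` in a given subspace of the
algebra acting on the right and `m` in a given subspace of the module. -/
def Submodule.rprod {k B M : Type*} [Field k] [Ring B] [Algebra k B]
    [AddCommGroup M] [Module k M] [Module Bᵐᵒᵖ M] [IsScalarTower k Bᵐᵒᵖ M]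
    (N : Submodule k M) (P : Submodule k B) : Submodule k M :=
  Submodule.span k {x | ∃ b ∈ P, ∃ m ∈ N, x = op b • m}

/-- The `n`-th power `rad(A)ⁿ·N` of the Jacobson radical of `A` applied to a subspace `N`
of a left `A`-module (with `rad⁰(A)·N = N`). -/
def radPow {k A M : Type*} [Field k] [Ring A] [Algebra k A]
    [AddCommGroup M] [Module k M] [Module A M] [IsScalarTower k A M] :
    ℕ → Submodule k M → Submodule k M
  | 0, N => N
  | n + 1, N => Submodule.lprod (((⊥ : Ideal A).jacobson).restrictScalars k) (radPow (A := A) n N)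

/-- The `n`-th power `N·rad(B)ⁿ` of the Jacobson radical of `B` applied on the right to a
subspace `N` of a right `B`-module. -/
def radPowR {k B M : Type*} [Field k] [Ring B] [Algebra k B]
    [AddCommGroup M] [Module k M] [Module Bᵐᵒᵖ M] [IsScalarTower k Bᵐᵒᵖ M] :
    ℕ → Submodule k M → Submodule k M
  | 0, N => N
  | n + 1, N => Submodule.rprod (radPowR (B := B) n N)
      (((⊥ : Ideal B).jacobson).restrictScalars k)

open TensorProduct MulOpposite

variable (k : Type*) [Field k]

/-- The submodule of `M ⊗[k] N` of `B`-balancing relations, whose quotient is `M ⊗[B] N`. -/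
def balancedRel (B M N : Type*) [Ring B] [Algebra k B]
    [AddCommGroup M] [Module k M] [Module Bᵐᵒᵖ M] [IsScalarTower k Bᵐᵒᵖ M]
    [AddCommGroup N] [Module k N] [Module B N] [IsScalarTower k B N] :
    Submodule k (M ⊗[k] N) :=
  Submodule.span k {x | ∃ (m : M) (b : B) (n : N), x = (op b • m) ⊗ₜ[k] n - m ⊗ₜ[k] (b • n)}

/-- The tensor product `M ⊗_B N` of a right `B`-module and a left `B`-module over a
(possibly noncommutative) `k`-algebra `B`, as the quotient of `M ⊗[k] N` by the balancing
relations. -/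
def TensorOver (B M N : Type*) [Ring B] [Algebra k B]
    [AddCommGroup M] [Module k M] [Module Bᵐᵒᵖ M] [IsScalarTower k Bᵐᵒᵖ M]
    [AddCommGroup N] [Module k N] [Module B N] [IsScalarTower k B N] : Type _ :=
  (M ⊗[k] N) ⧸ balancedRel k B M N

noncomputable instance (B M N : Type*) [Ring B] [Algebra k B]
    [AddCommGroup M] [Module k M] [Module Bᵐᵒᵖ M] [IsScalarTower k Bᵐᵒᵖ M]
    [AddCommGroup N] [Module k N] [Module B N] [IsScalarTower k B N] :
    AddCommGroup (TensorOver k B M N) :=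
  inferInstanceAs (AddCommGroup ((M ⊗[k] N) ⧸ balancedRel k B M N))

noncomputable instance (B M N : Type*) [Ring B] [Algebra k B]
    [AddCommGroup M] [Module k M] [Module Bᵐᵒᵖ M] [IsScalarTower k Bᵐᵒᵖ M]
    [AddCommGroup N] [Module k N] [Module B N] [IsScalarTower k B N] :
    Module k (TensorOver k B M N) :=
  inferInstanceAs (Module k ((M ⊗[k] N) ⧸ balancedRel k B M N))

/-- The canonical projection `M ⊗[k] N → M ⊗_B N`. -/
noncomputable def TensorOver.mk (B M N : Type*) [Ring B] [Algebra k B]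
    [AddCommGroup M] [Module k M] [Module Bᵐᵒᵖ M] [IsScalarTower k Bᵐᵒᵖ M]
    [AddCommGroup N] [Module k N] [Module B N] [IsScalarTower k B N] :
    (M ⊗[k] N) →ₗ[k] TensorOver k B M N :=
  (balancedRel k B M N).mkQ


section Aux

variable {k : Type*} [Field k] {M N : Type*} [AddCommGroup M] [Module k M]
  [AddCommGroup N] [Module k N]

lemma span_tmul_span_left (S : Set M) :
    Submodule.span k {x : M ⊗[k] N | ∃ m ∈ Submodule.span k S, ∃ n : N, x = m ⊗ₜ[k] n}
      = Submodule.span k {x : M ⊗[k] N | ∃ m ∈ S, ∃ n : N, x = m ⊗ₜ[k] n} := by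
  refine le_antisymm (Submodule.span_le.2 ?_) (Submodule.span_mono ?_)
  · rintro x ⟨m, hm, n, rfl⟩
    induction hm using Submodule.span_induction with
    | mem s hs => exact Submodule.subset_span ⟨s, hs, n, rfl⟩
    | zero => rw [TensorProduct.zero_tmul]; exact zero_mem _
    | add a b _ _ ha hb => rw [TensorProduct.add_tmul]; exact add_mem ha hb
    | smul c a _ ha => rw [← TensorProduct.smul_tmul']; exact Submodule.smul_mem _ c ha
  · rintro x ⟨m, hm, n, rfl⟩
    exact ⟨m, Submodule.subset_span hm, n, rfl⟩

lemma span_tmul_span_right (S : Set N) :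
    Submodule.span k {x : M ⊗[k] N | ∃ m : M, ∃ n ∈ Submodule.span k S, x = m ⊗ₜ[k] n}
      = Submodule.span k {x : M ⊗[k] N | ∃ m : M, ∃ n ∈ S, x = m ⊗ₜ[k] n} := by
  refine le_antisymm (Submodule.span_le.2 ?_) (Submodule.span_mono ?_)
  · rintro x ⟨m, n, hn, rfl⟩
    induction hn using Submodule.span_induction with
    | mem s hs => exact Submodule.subset_span ⟨m, s, hs, rfl⟩
    | zero => rw [TensorProduct.tmul_zero]; exact zero_mem _
    | add a b _ _ ha hb => rw [TensorProduct.tmul_add]; exact add_mem ha hb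
    | smul c a _ ha => rw [TensorProduct.tmul_smul]; exact Submodule.smul_mem _ c ha
  · rintro x ⟨m, n, hn, rfl⟩
    exact ⟨m, n, Submodule.subset_span hn, rfl⟩

end Aux

/-- Let `M` be a radically symmetric `A`-`B` bimodule and `N` a radically
symmetric `B`-`C` bimodule over finite-dimensional `k`-algebras.  Then the `A`-`C` bimodule
`M ⊗_B N` is radically symmetric; more precisely
`rad(A)·(M ⊗_B N) = (rad(A)·M) ⊗_B N = M ⊗_B (rad(B)·N) = M ⊗_B (N·rad(C)) = (M ⊗_B N)·rad(C)`
as subspaces of `M ⊗_B N`. -/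
theorem tensorOver_radically_symmetric {A B C M N : Type*}
    [Ring A] [Algebra k A] [FiniteDimensional k A]
    [Ring B] [Algebra k B] [FiniteDimensional k B]
    [Ring C] [Algebra k C] [FiniteDimensional k C]
    [AddCommGroup M] [Module k M]
    [Module A M] [IsScalarTower k A M]
    [Module Bᵐᵒᵖ M] [IsScalarTower k Bᵐᵒᵖ M]
    [SMulCommClass A Bᵐᵒᵖ M]
    [AddCommGroup N] [Module k N]
    [Module B N] [IsScalarTower k B N]
    [Module Cᵐᵒᵖ N] [IsScalarTower k Cᵐᵒᵖ N]
    [SMulCommClass B Cᵐᵒᵖ N]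
    (hM : radPow (A := A) 1 (⊤ : Submodule k M) = radPowR (B := B) 1 (⊤ : Submodule k M))
    (hN : radPow (A := B) 1 (⊤ : Submodule k N) = radPowR (B := C) 1 (⊤ : Submodule k N)) :
    Submodule.map (TensorOver.mk k B M N)
        (Submodule.span k {x | ∃ a ∈ ((⊥ : Ideal A).jacobson).restrictScalars k,
          ∃ (m : M) (n : N), x = (a • m) ⊗ₜ[k] n})
      = Submodule.map (TensorOver.mk k B M N)
        (Submodule.span k {x | ∃ m ∈ radPow (A := A) 1 (⊤ : Submodule k M),
          ∃ n : N, x = m ⊗ₜ[k] n}) ∧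
    Submodule.map (TensorOver.mk k B M N)
        (Submodule.span k {x | ∃ m ∈ radPow (A := A) 1 (⊤ : Submodule k M),
          ∃ n : N, x = m ⊗ₜ[k] n})
      = Submodule.map (TensorOver.mk k B M N)
        (Submodule.span k {x | ∃ (m : M), ∃ n ∈ radPow (A := B) 1 (⊤ : Submodule k N),
          x = m ⊗ₜ[k] n}) ∧
    Submodule.map (TensorOver.mk k B M N)
        (Submodule.span k {x | ∃ (m : M), ∃ n ∈ radPow (A := B) 1 (⊤ : Submodule k N),
          x = m ⊗ₜ[k] n})
      = Submodule.map (TensorOver.mk k B M N)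
        (Submodule.span k {x | ∃ (m : M), ∃ n ∈ radPowR (B := C) 1 (⊤ : Submodule k N),
          x = m ⊗ₜ[k] n}) ∧
    Submodule.map (TensorOver.mk k B M N)
        (Submodule.span k {x | ∃ (m : M), ∃ n ∈ radPowR (B := C) 1 (⊤ : Submodule k N),
          x = m ⊗ₜ[k] n})
      = Submodule.map (TensorOver.mk k B M N)
        (Submodule.span k {x | ∃ c ∈ ((⊥ : Ideal C).jacobson).restrictScalars k,
          ∃ (m : M) (n : N), x = m ⊗ₜ[k] (op c • n)}) := by
  set radA := ((⊥ : Ideal A).jacobson).restrictScalars k with hradA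
  set radB := ((⊥ : Ideal B).jacobson).restrictScalars k with hradB
  set radC := ((⊥ : Ideal C).jacobson).restrictScalars k with hradC
  have hM1 : radPow (A := A) 1 (⊤ : Submodule k M)
      = Submodule.span k {x : M | ∃ a ∈ radA, ∃ m ∈ (⊤ : Submodule k M), x = a • m} := rfl
  have hMR1 : radPowR (B := B) 1 (⊤ : Submodule k M)
      = Submodule.span k {x : M | ∃ b ∈ radB, ∃ m ∈ (⊤ : Submodule k M), x = op b • m} := rfl
  have hN1 : radPow (A := B) 1 (⊤ : Submodule k N)
      = Submodule.span k {x : N | ∃ b ∈ radB, ∃ n ∈ (⊤ : Submodule k N), x = b • n} := rfl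
  have hNR1 : radPowR (B := C) 1 (⊤ : Submodule k N)
      = Submodule.span k {x : N | ∃ c ∈ radC, ∃ n ∈ (⊤ : Submodule k N), x = op c • n} := rfl
  refine ⟨?_, ?_, ?_, ?_⟩
  · -- goal 1 : pure linearity on the left
    congr 1
    rw [hM1, span_tmul_span_left]
    congr 1
    ext x
    constructor
    · rintro ⟨a, ha, m, n, rfl⟩; exact ⟨a • m, ⟨a, ha, m, trivial, rfl⟩, n, rfl⟩
    · rintro ⟨m', ⟨a, ha, m, -, rfl⟩, n, rfl⟩; exact ⟨a, ha, m, n, rfl⟩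
  · -- goal 2 : the key step, using hM and the balancing relations
    have key : ∀ (b : B) (m : M) (n : N),
        TensorOver.mk k B M N ((op b • m) ⊗ₜ[k] n)
          = TensorOver.mk k B M N (m ⊗ₜ[k] (b • n)) := by
      intro b m n
      have hx : (op b • m) ⊗ₜ[k] n - m ⊗ₜ[k] (b • n) ∈ balancedRel k B M N :=
        Submodule.subset_span ⟨m, b, n, rfl⟩
      exact (Submodule.Quotient.eq _).2 hx
    rw [hM, hMR1, span_tmul_span_left, hN1, span_tmul_span_right,
      Submodule.map_span, Submodule.map_span]
    refine le_antisymm (Submodule.span_le.2 ?_) (Submodule.span_le.2 ?_)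
    · rintro y ⟨x, ⟨m', ⟨b, hb, m, -, rfl⟩, n, rfl⟩, rfl⟩
      exact Submodule.subset_span
        ⟨m ⊗ₜ[k] (b • n), ⟨m, b • n, ⟨b, hb, n, trivial, rfl⟩, rfl⟩, (key b m n).symm⟩
    · rintro y ⟨x, ⟨m, n', ⟨b, hb, n, -, rfl⟩, rfl⟩, rfl⟩
      exact Submodule.subset_span
        ⟨(op b • m) ⊗ₜ[k] n, ⟨op b • m, ⟨b, hb, m, trivial, rfl⟩, n, rfl⟩, key b m n⟩
  · -- goal 3 : immediate from hN
    rw [hN]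
  · -- goal 4 : pure linearity on the right
    congr 1
    rw [hNR1, span_tmul_span_right]
    congr 1
    ext x
    constructor
    · rintro ⟨m, n, ⟨c, hc, n0, -, rfl⟩, rfl⟩; exact ⟨c, hc, m, n0, rfl⟩
    · rintro ⟨c, hc, m, n, rfl⟩; exact ⟨m, op c • n, ⟨c, hc, n, trivial, rfl⟩, rfl⟩
end

section
/- Let A, B, C be finite-dimensional algebras over a field k, let M be a radically symmetric A-B bimodule and N a radically symmetric B-C bimodule. Then there is a canonical isomorphism of A-C bimodules f_{M,N} : (M ⊗_B N)/rad(M ⊗_B N) ≅ (M/rad M) ⊗_B (N/rad N), induced by m ⊗ n ↦ (m + rad M) ⊗ (n + rad N), with inverse induced by (m + rad M) ⊗ (n + rad N) ↦ m ⊗ n + rad(M ⊗_B N). -/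
open MulOpposite

open TensorProduct MulOpposite

variable (k : Type*) [Field k]

variable {A B C M N : Type*}
    [Ring A] [Algebra k A]
    [Ring B] [Algebra k B]
    [Ring C] [Algebra k C]
    [AddCommGroup M] [Module k M]
    [Module A M] [IsScalarTower k A M]
    [Module Bᵐᵒᵖ M] [IsScalarTower k Bᵐᵒᵖ M]
    [SMulCommClass A Bᵐᵒᵖ M]
    [AddCommGroup N] [Module k N]
    [Module B N] [IsScalarTower k B N]
    [Module Cᵐᵒᵖ N] [IsScalarTower k Cᵐᵒᵖ N]
    [SMulCommClass B Cᵐᵒᵖ N]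

/-- `rad(M ⊗_B N)`, realized (as in the paper, using radical symmetry) as the image of
`M ⊗ rad(N)` in `M ⊗_B N`. -/
noncomputable def radTensorOver : Submodule k (TensorOver k B M N) :=
  Submodule.map (TensorOver.mk k B M N)
    (Submodule.span k {x | ∃ (m : M), ∃ n ∈ radPow (A := B) 1 (⊤ : Submodule k N),
      x = m ⊗ₜ[k] n})

/-- The balancing relations on `(M/rad M) ⊗[k] (N/rad N)` whose quotient is
`(M/rad M) ⊗_B (N/rad N)`. -/
noncomputable def balancedRelBar : Submodule k
    ((M ⧸ radPow (A := A) 1 (⊤ : Submodule k M)) ⊗[k]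
      (N ⧸ radPow (A := B) 1 (⊤ : Submodule k N))) :=
  Submodule.span k {x | ∃ (m : M) (b : B) (n : N),
    x = ((radPow (A := A) 1 (⊤ : Submodule k M)).mkQ (op b • m)) ⊗ₜ[k]
          ((radPow (A := B) 1 (⊤ : Submodule k N)).mkQ n)
      - ((radPow (A := A) 1 (⊤ : Submodule k M)).mkQ m) ⊗ₜ[k]
          ((radPow (A := B) 1 (⊤ : Submodule k N)).mkQ (b • n))}

set_option maxHeartbeats 1000000 in
/-- Let `M` be a radically symmetric `A`-`B` bimodule and `N` a radically
symmetric `B`-`C` bimodule over finite-dimensional `k`-algebras.  Then there is a canonical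
isomorphism `(M ⊗_B N)/rad(M ⊗_B N) ≅ (M/rad M) ⊗_B (N/rad N)` induced by
`m ⊗ n ↦ (m + rad M) ⊗ (n + rad N)`, with inverse induced by
`(m + rad M) ⊗ (n + rad N) ↦ m ⊗ n + rad(M ⊗_B N)`. -/
theorem tensorOver_quotient_radical_iso
    [FiniteDimensional k A] [FiniteDimensional k B] [FiniteDimensional k C]
    (hM : radPow (A := A) 1 (⊤ : Submodule k M) = radPowR (B := B) 1 (⊤ : Submodule k M))
    (hN : radPow (A := B) 1 (⊤ : Submodule k N) = radPowR (B := C) 1 (⊤ : Submodule k N)) :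
    ∃ e : (TensorOver k B M N ⧸ radTensorOver k (M := M)) ≃ₗ[k]
        (((M ⧸ radPow (A := A) 1 (⊤ : Submodule k M)) ⊗[k]
          (N ⧸ radPow (A := B) 1 (⊤ : Submodule k N))) ⧸ balancedRelBar k),
      (∀ (m : M) (n : N),
        e ((radTensorOver k (M := M)).mkQ (TensorOver.mk k B M N (m ⊗ₜ[k] n)))
          = (balancedRelBar k (A := A) (M := M)).mkQ
              (((radPow (A := A) 1 (⊤ : Submodule k M)).mkQ m) ⊗ₜ[k]
                ((radPow (A := B) 1 (⊤ : Submodule k N)).mkQ n))) ∧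
      (∀ (m : M) (n : N),
        e.symm ((balancedRelBar k (A := A) (M := M)).mkQ
              (((radPow (A := A) 1 (⊤ : Submodule k M)).mkQ m) ⊗ₜ[k]
                ((radPow (A := B) 1 (⊤ : Submodule k N)).mkQ n)))
          = (radTensorOver k (M := M)).mkQ (TensorOver.mk k B M N (m ⊗ₜ[k] n))) := by
  
  classical
  -- Notation
  set radM := radPow (A := A) 1 (⊤ : Submodule k M) with hradM
  set radN := radPow (A := B) 1 (⊤ : Submodule k N) with hradN
  set R := balancedRel k B M N with hR
  set S : Submodule k (M ⊗[k] N) :=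
    Submodule.span k {x | ∃ (m : M), ∃ n ∈ radN, x = m ⊗ₜ[k] n} with hS
  set φ : (M ⊗[k] N) →ₗ[k] ((M ⧸ radM) ⊗[k] (N ⧸ radN)) :=
    TensorProduct.map radM.mkQ radN.mkQ with hφ
  -- φ maps balancedRel onto balancedRelBar
  have hφR : Submodule.map φ R = balancedRelBar k (A := A) (M := M) := by
    rw [hR, balancedRel, balancedRelBar, Submodule.map_span]
    congr 1
    ext x
    simp only [Set.mem_image, Set.mem_setOf_eq]
    constructor
    · rintro ⟨y, ⟨m, b, n, rfl⟩, rfl⟩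
      exact ⟨m, b, n, by simp [hφ]⟩
    · rintro ⟨m, b, n, rfl⟩
      exact ⟨(op b • m) ⊗ₜ[k] n - m ⊗ₜ[k] (b • n), ⟨m, b, n, rfl⟩, by simp [hφ]⟩
  -- the key lemma: for m' ∈ rad M, m' ⊗ n ∈ R ⊔ S
  have key : ∀ m' ∈ radM, ∀ n : N, m' ⊗ₜ[k] n ∈ R ⊔ S := by
    intro m' hm' n
    rw [hM] at hm'
    have hm'' : m' ∈ Submodule.span k
        {x : M | ∃ b ∈ (((⊥ : Ideal B).jacobson).restrictScalars k), ∃ m ∈ (⊤ : Submodule k M),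
          x = op b • m} := hm'
    clear hm'
    induction hm'' using Submodule.span_induction generalizing n with
    | mem x hx =>
      obtain ⟨b, hb, m, -, rfl⟩ := hx
      have h1 : (op b • m) ⊗ₜ[k] n - m ⊗ₜ[k] (b • n) ∈ R := by
        rw [hR, balancedRel]
        exact Submodule.subset_span ⟨m, b, n, rfl⟩
      have h2 : m ⊗ₜ[k] (b • n) ∈ S := by
        rw [hS]
        refine Submodule.subset_span ⟨m, b • n, ?_, rfl⟩
        rw [hradN]
        show b • n ∈ Submodule.lprod _ _
        exact Submodule.subset_span ⟨b, hb, n, trivial, rfl⟩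
      have := add_mem (Submodule.mem_sup_left h1) (Submodule.mem_sup_right h2)
      simpa using this
    | zero => simpa using (R ⊔ S).zero_mem
    | add x y _ _ ihx ihy =>
      have := add_mem (ihx n) (ihy n)
      rwa [← TensorProduct.add_tmul] at this
    | smul c x _ ihx =>
      have := (R ⊔ S).smul_mem c (ihx n)
      rwa [TensorProduct.smul_tmul'] at this
  -- S ≤ ker φ
  have hSker : S ≤ LinearMap.ker φ := by
    rw [hS, Submodule.span_le]
    rintro x ⟨m, n, hn, rfl⟩
    simp [LinearMap.mem_ker, hφ, (Submodule.Quotient.mk_eq_zero _).2 hn]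
  -- ker φ ≤ R ⊔ S
  have hkerφ : LinearMap.ker φ ≤ R ⊔ S := by
    rw [hφ, TensorProduct.map_ker (LinearMap.exact_subtype_mkQ radM)
      (Submodule.mkQ_surjective radM) (LinearMap.exact_subtype_mkQ radN)
      (Submodule.mkQ_surjective radN)]
    apply sup_le
    · rintro x ⟨y, rfl⟩
      induction y using TensorProduct.induction_on with
      | zero => simpa using (R ⊔ S).zero_mem
      | tmul m n =>
        apply Submodule.mem_sup_right
        rw [hS]
        exact Submodule.subset_span ⟨m, (n : N), n.2, by simp⟩
      | add a b iha ihb =>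
        rw [map_add]; exact add_mem iha ihb
    · rintro x ⟨y, rfl⟩
      induction y using TensorProduct.induction_on with
      | zero => simpa using (R ⊔ S).zero_mem
      | tmul m n => simpa using key (m : M) m.2 n
      | add a b iha ihb =>
        rw [map_add]; exact add_mem iha ihb
  -- the two projections
  set q₁ : (M ⊗[k] N) →ₗ[k] (TensorOver k B M N ⧸ radTensorOver k (M := M)) :=
    (radTensorOver k (M := M)).mkQ ∘ₗ TensorOver.mk k B M N with hq₁
  set q₂ : (M ⊗[k] N) →ₗ[k]
      (((M ⧸ radM) ⊗[k] (N ⧸ radN)) ⧸ balancedRelBar k (A := A) (M := M)) :=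
    (balancedRelBar k (A := A) (M := M)).mkQ ∘ₗ φ with hq₂
  have hq₁surj : Function.Surjective q₁ :=
    (Submodule.mkQ_surjective _).comp (Submodule.mkQ_surjective _)
  have hφsurj : Function.Surjective φ := by
    rw [hφ]
    exact TensorProduct.map_surjective (Submodule.mkQ_surjective radM)
      (Submodule.mkQ_surjective radN)
  have hq₂surj : Function.Surjective q₂ :=
    (Submodule.mkQ_surjective _).comp hφsurj
  -- kernels
  have hker₁ : LinearMap.ker q₁ = S ⊔ R := by
    rw [hq₁, LinearMap.ker_comp, Submodule.ker_mkQ]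
    show Submodule.comap (balancedRel k B M N).mkQ (radTensorOver k (M := M)) = S ⊔ R
    rw [radTensorOver]
    show Submodule.comap (balancedRel k B M N).mkQ
      (Submodule.map (balancedRel k B M N).mkQ S) = S ⊔ R
    rw [Submodule.comap_map_eq, Submodule.ker_mkQ, hR]
  have hker₂ : LinearMap.ker q₂ = S ⊔ R := by
    rw [hq₂, LinearMap.ker_comp, Submodule.ker_mkQ, ← hφR, Submodule.comap_map_eq]
    rw [sup_comm S R]
    apply le_antisymm
    · exact sup_le (le_sup_left) (le_trans hkerφ le_rfl)
    · exact sup_le le_sup_left (le_trans hSker le_sup_right)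
  have hker : LinearMap.ker q₁ = LinearMap.ker q₂ := hker₁.trans hker₂.symm
  -- the isomorphism
  set e₁ := q₁.quotKerEquivOfSurjective hq₁surj with he₁
  set e₂ := q₂.quotKerEquivOfSurjective hq₂surj with he₂
  have e₁mk : ∀ x : M ⊗[k] N, e₁ (Submodule.Quotient.mk x) = q₁ x := by
    intro x
    simp [he₁, LinearMap.quotKerEquivOfSurjective, LinearMap.quotKerEquivRange]
  have e₂mk : ∀ x : M ⊗[k] N, e₂ (Submodule.Quotient.mk x) = q₂ x := by
    intro x
    simp [he₂, LinearMap.quotKerEquivOfSurjective, LinearMap.quotKerEquivRange]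
  set e := e₁.symm ≪≫ₗ (Submodule.quotEquivOfEq _ _ hker) ≪≫ₗ e₂ with he
  have emain : ∀ x : M ⊗[k] N, e (q₁ x) = q₂ x := by
    intro x
    have h1 : e₁.symm (q₁ x) = Submodule.Quotient.mk x := by
      apply e₁.injective; simp [e₁mk]
    rw [he]
    simp only [LinearEquiv.trans_apply, h1]
    rw [Submodule.quotEquivOfEq_mk]
    exact e₂mk x
  refine ⟨e, ?_, ?_⟩
  · intro m n
    have := emain (m ⊗ₜ[k] n)
    rw [hq₁, hq₂, hφ] at this
    simp only [LinearMap.comp_apply, TensorProduct.map_tmul] at this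
    exact this
  · intro m n
    apply e.injective
    rw [e.apply_symm_apply]
    have := emain (m ⊗ₜ[k] n)
    rw [hq₁, hq₂, hφ] at this
    simp only [LinearMap.comp_apply, TensorProduct.map_tmul] at this
    exact this.symm
end

section
/- Let k be a field, let P and Q be quivers, let n ≥ 2, and let I_n denote the admissible ideal of the path algebra spanned by all paths of length at least n. Then every quiver connection (U, Γ) between P and Q is ideally connected as a connection between the bound quivers (P, I_n) and (Q, I_n); equivalently, the natural inclusion of the category of connections between the bound quivers (P,I_n) and (Q,I_n) into the category of all quiver connections between P and Q is bijective on 1-morphisms (fully faithful and essentially surjective). -/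
open TensorProduct

/-- A (finite) quiver: a finite set of vertices together with finitely many arrows between
any two vertices. -/
structure Quiv where
  V : Type
  E : V → V → Type
  [fintV : Fintype V]
  [decV : DecidableEq V]
  [fintE : ∀ a b, Fintype (E a b)]

attribute [instance] Quiv.fintV Quiv.decV Quiv.fintE

instance (Q : Quiv) : Quiver Q.V := ⟨Q.E⟩

variable (k : Type*) [Field k]

/-- The `k`-linear span of the arrows of `Q` from `a` to `b`. -/
abbrev EdgeSpace (Q : Quiv) (a b : Q.V) : Type _ := Q.E a b →₀ k

/-- The `k`-linear span of the paths of `Q` from `a` to `b`. -/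
abbrev PathSpace (Q : Quiv) (a b : Q.V) : Type _ := Quiver.Path a b →₀ k

/-- Reorganizing a family of linear maps into a linear map into the product. -/
def piHomSwap {P : Type*} [AddCommGroup P] [Module k P] {ι : Type*} {B : ι → Type*}
    [∀ i, AddCommGroup (B i)] [∀ i, Module k (B i)] :
    ((i : ι) → (P →ₗ[k] B i)) →ₗ[k] (P →ₗ[k] (i : ι) → B i) where
  toFun f := LinearMap.pi f
  map_add' f g := by ext x i; rfl
  map_smul' c f := by ext x i; rfl

/-- Prepending an edge to paths, as a bilinear map. -/
noncomputable def consMapF (Q : Quiv) (a b c : Q.V) :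
    EdgeSpace k Q a b →ₗ[k] PathSpace k Q b c →ₗ[k] PathSpace k Q a c :=
  Finsupp.lsum k fun e => LinearMap.toSpanSingleton k _
    (Finsupp.lmapDomain k k fun p => (Quiver.Hom.toPath e).comp p)

/-- Appending an edge to paths, as a bilinear map. -/
noncomputable def consMapB (Q : Quiv) (a b c : Q.V) :
    EdgeSpace k Q b c →ₗ[k] PathSpace k Q a b →ₗ[k] PathSpace k Q a c :=
  Finsupp.lsum k fun e => LinearMap.toSpanSingleton k _
    (Finsupp.lmapDomain k k fun p => p.cons e)

/-- Concatenation of paths, as a bilinear map. -/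
noncomputable def compMap (Q : Quiv) (a b c : Q.V) :
    PathSpace k Q a b →ₗ[k] PathSpace k Q b c →ₗ[k] PathSpace k Q a c :=
  Finsupp.lsum k fun p => LinearMap.toSpanSingleton k _
    (Finsupp.lmapDomain k k fun q => p.comp q)

section Connection

variable (G H : Quiv) (Γ : G.V → H.V → Type*)
  [∀ g h, AddCommGroup (Γ g h)] [∀ g h, Module k (Γ g h)]

/-- The space of formal sums of "a connection edge followed by a path of `H` ending at `h`",
starting at `g ∈ G`; this is the `(g,h)`-component of the `kG`-`kH` bimodule `kΓH`. -/
abbrev WSp (g : G.V) (h : H.V) : Type _ := (h' : H.V) → Γ g h' ⊗[k] PathSpace k H h' h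

/-- The space of formal sums of "a path of `G` starting at `g` followed by a connection
edge", ending at `h ∈ H`. -/
abbrev W2Sp (g : G.V) (h : H.V) : Type _ := (g' : G.V) → PathSpace k G g g' ⊗[k] Γ g' h

/-- A connection between the quivers `G` and `H` with connection edge spaces `Γ`: a family of
linear isomorphisms `U_{g,h} : ⊕_{g'} E^G_{g,g'} ⊗ Γ_{g',h} → ⊕_{h'} Γ_{g,h'} ⊗ E^H_{h',h}`. -/
abbrev Connection : Type _ :=
  ∀ (g : G.V) (h : H.V),
    ((g' : G.V) → (EdgeSpace k G g g' ⊗[k] Γ g' h)) ≃ₗ[k]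
    ((h' : H.V) → (Γ g h' ⊗[k] EdgeSpace k H h' h))

/-- Inclusion of a connection edge as a connection edge followed by an empty path. -/
noncomputable def incl0 (g : G.V) (h : H.V) : Γ g h →ₗ[k] WSp k G H Γ g h :=
  LinearMap.pi fun h' =>
    if hh : h' = h then
      (by subst hh
          exact (TensorProduct.mk k (Γ g h') (PathSpace k H h' h')).flip
            (Finsupp.single Quiver.Path.nil 1))
    else 0

/-- Inclusion of a connection edge as an empty path followed by a connection edge. -/
noncomputable def incl2 (g : G.V) (h : H.V) : Γ g h →ₗ[k] W2Sp k G H Γ g h :=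
  LinearMap.pi fun g' =>
    if hg : g' = g then
      (by subst hg
          exact TensorProduct.mk k (PathSpace k G g' g') (Γ g' h)
            (Finsupp.single Quiver.Path.nil 1))
    else 0

variable (U : Connection k G H Γ)

/-- Attaching an emitted `H`-edge to the front of the trailing `H`-path. -/
noncomputable def attachF (gg : G.V) (h' h'' h : H.V) :
    (Γ gg h' ⊗[k] EdgeSpace k H h' h'') →ₗ[k]
      (PathSpace k H h'' h →ₗ[k] (Γ gg h' ⊗[k] PathSpace k H h' h)) :=
  TensorProduct.lift
    (((LinearMap.llcomp k (PathSpace k H h'' h) (PathSpace k H h' h)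
        (Γ gg h' ⊗[k] PathSpace k H h' h)).comp
      (TensorProduct.mk k (Γ gg h') (PathSpace k H h' h))).compl₂
        (consMapF k H h' h'' h))

/-- Moving a single `G`-edge `e : c ⟶ g'` across the connection, on one component. -/
noncomputable def stepAuxF {c g' : G.V} (e : G.E c g') (h h'' : H.V) :
    (Γ g' h'' ⊗[k] PathSpace k H h'' h) →ₗ[k] WSp k G H Γ c h :=
  TensorProduct.lift
    ((piHomSwap k (P := PathSpace k H h'' h)
        (B := fun h' => Γ c h' ⊗[k] PathSpace k H h' h)).comp
      ((LinearMap.pi fun h' =>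
          (attachF k G H Γ c h' h'' h).comp
            (LinearMap.proj (φ := fun h' => Γ c h' ⊗[k] EdgeSpace k H h' h'') h')).comp
        ((((U c h'').toLinearMap).comp
            (LinearMap.single k (fun g'' => EdgeSpace k G c g'' ⊗[k] Γ g'' h'') g')).comp
          ((TensorProduct.mk k (EdgeSpace k G c g') (Γ g' h''))
            (Finsupp.single e 1)))))

/-- Moving a single `G`-edge `e : c ⟶ g'` across the connection. -/
noncomputable def stepF {c g' : G.V} (e : G.E c g') (h : H.V) :
    WSp k G H Γ g' h →ₗ[k] WSp k G H Γ c h :=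
  ∑ h'' : H.V,
    (stepAuxF k G H Γ U e h h'').comp
      (LinearMap.proj (φ := fun h'' => Γ g' h'' ⊗[k] PathSpace k H h'' h) h'')

/-- Transporting across the connection along an entire path of `G` (the iteration `Uⁿ` of the
connection isomorphisms). -/
noncomputable def transportF (g : G.V) (h : H.V) :
    ∀ {c : G.V}, Quiver.Path g c → (WSp k G H Γ c h →ₗ[k] WSp k G H Γ g h)
  | _, Quiver.Path.nil => LinearMap.id
  | _, Quiver.Path.cons p e => (transportF g h p).comp (stepF k G H Γ U e h)

/-- Transporting linear combinations of paths of `G` across the connection. -/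
noncomputable def transportLF (g c : G.V) (h : H.V) :
    PathSpace k G g c →ₗ[k] (WSp k G H Γ c h →ₗ[k] WSp k G H Γ g h) :=
  Finsupp.lsum k fun p => LinearMap.toSpanSingleton k _ (transportF k G H Γ U g h p)

/-- Attaching an emitted `G`-edge to the end of the leading `G`-path. -/
noncomputable def attachB (g g' g'' : G.V) (hh : H.V) :
    (EdgeSpace k G g' g'' ⊗[k] Γ g'' hh) →ₗ[k]
      (PathSpace k G g g' →ₗ[k] (PathSpace k G g g'' ⊗[k] Γ g'' hh)) :=
  TensorProduct.lift
    (((LinearMap.lflip :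
        (PathSpace k G g g' →ₗ[k] Γ g'' hh →ₗ[k] PathSpace k G g g'' ⊗[k] Γ g'' hh) ≃ₗ[k]
        (Γ g'' hh →ₗ[k] PathSpace k G g g' →ₗ[k] PathSpace k G g g'' ⊗[k] Γ g'' hh)) :
        (PathSpace k G g g' →ₗ[k] Γ g'' hh →ₗ[k] PathSpace k G g g'' ⊗[k] Γ g'' hh) →ₗ[k]
        (Γ g'' hh →ₗ[k] PathSpace k G g g' →ₗ[k] PathSpace k G g g'' ⊗[k] Γ g'' hh)).comp
      (((LinearMap.llcomp k (PathSpace k G g g') (PathSpace k G g g'')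
          (Γ g'' hh →ₗ[k] PathSpace k G g g'' ⊗[k] Γ g'' hh))
        (TensorProduct.mk k (PathSpace k G g g'') (Γ g'' hh))).comp
          (consMapB k G g g' g'')))

/-- Moving a single `H`-edge `e : c ⟶ d` backwards across the connection, on one component. -/
noncomputable def stepAuxB {c d : H.V} (e : H.E c d) (g g' : G.V) :
    (PathSpace k G g g' ⊗[k] Γ g' c) →ₗ[k] W2Sp k G H Γ g d :=
  TensorProduct.lift
    (LinearMap.flip
      ((piHomSwap k (P := PathSpace k G g g')
          (B := fun g'' => PathSpace k G g g'' ⊗[k] Γ g'' d)).comp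
        ((LinearMap.pi fun g'' =>
            (attachB k G H Γ g g' g'' d).comp
              (LinearMap.proj (φ := fun g'' => EdgeSpace k G g' g'' ⊗[k] Γ g'' d) g'')).comp
          ((((U g' d).symm.toLinearMap).comp
              (LinearMap.single k (fun h' => Γ g' h' ⊗[k] EdgeSpace k H h' d) c)).comp
            (((TensorProduct.mk k (Γ g' c) (EdgeSpace k H c d)).flip)
              (Finsupp.single e 1))))))

/-- Moving a single `H`-edge `e : c ⟶ d` backwards across the connection. -/
noncomputable def stepB {c d : H.V} (e : H.E c d) (g : G.V) :
    W2Sp k G H Γ g c →ₗ[k] W2Sp k G H Γ g d :=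
  ∑ g' : G.V,
    (stepAuxB k G H Γ U e g g').comp
      (LinearMap.proj (φ := fun g' => PathSpace k G g g' ⊗[k] Γ g' c) g')

/-- Transporting backwards across the connection along an entire path of `H` (the iteration
of the inverse connection isomorphisms). -/
noncomputable def transportB (g : G.V) (c : H.V) :
    ∀ {d : H.V}, Quiver.Path c d → (W2Sp k G H Γ g c →ₗ[k] W2Sp k G H Γ g d)
  | _, Quiver.Path.nil => LinearMap.id
  | _, Quiver.Path.cons p e => (stepB k G H Γ U e g).comp (transportB g c p)

/-- Transporting linear combinations of paths of `H` backwards across the connection. -/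
noncomputable def transportLB (g : G.V) (c d : H.V) :
    PathSpace k H c d →ₗ[k] (W2Sp k G H Γ g c →ₗ[k] W2Sp k G H Γ g d) :=
  Finsupp.lsum k fun p => LinearMap.toSpanSingleton k _ (transportB k G H Γ U g c p)

end Connection

/-- A family of subspaces of the path spaces of a quiver (the graded components of an ideal
of the path algebra). -/
abbrev IdealFamily (Q : Quiv) : Type _ := ∀ a b : Q.V, Submodule k (PathSpace k Q a b)

/-- The family of subspaces is an ideal: it is closed under pre- and post-concatenation with
arbitrary paths. -/
def IsPathIdeal (Q : Quiv) (I : IdealFamily k Q) : Prop :=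
  (∀ (a b c : Q.V) (q : Quiver.Path a b) (x : PathSpace k Q b c), x ∈ I b c →
    Finsupp.mapDomain (fun p => q.comp p) x ∈ I a c) ∧
  (∀ (a b c : Q.V) (x : PathSpace k Q a b) (q : Quiver.Path b c), x ∈ I a b →
    Finsupp.mapDomain (fun p => p.comp q) x ∈ I a c)

/-- The ideal is admissible: it contains no paths of length `≤ 1`, and contains all paths of
length `≥ n` for some `n`. -/
def IsAdmissibleFamily (Q : Quiv) (I : IdealFamily k Q) : Prop :=
  (∀ (a b : Q.V) (p : Quiver.Path a b), p.length ≤ 1 → Finsupp.single p 1 ∉ I a b) ∧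
  (∃ n : ℕ, ∀ (a b : Q.V) (p : Quiver.Path a b), n ≤ p.length → Finsupp.single p 1 ∈ I a b)

/-- The ideal of the path algebra spanned by all paths of length at least `n`. -/
noncomputable def lengthIdeal (Q : Quiv) (n : ℕ) : IdealFamily k Q := fun a b =>
  Submodule.span k {x | ∃ p : Quiver.Path a b, n ≤ p.length ∧ x = Finsupp.single p 1}

section IdeallyConnected

variable (G H : Quiv) (Γ : G.V → H.V → Type*)
  [∀ g h, AddCommGroup (Γ g h)] [∀ g h, Module k (Γ g h)]

/-- The subspace of `WSp` spanned by connection edges followed by combinations of paths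
lying in `I_H`. -/
noncomputable def WIdeal (IH : IdealFamily k H) (a : G.V) (c : H.V) : Submodule k (WSp k G H Γ a c) :=
  Submodule.span k {w | ∃ (h' : H.V) (γ : Γ a h') (y : PathSpace k H h' c),
    y ∈ IH h' c ∧ w = Pi.single h' (γ ⊗ₜ[k] y)}

/-- The subspace of `W2Sp` spanned by combinations of paths lying in `I_G` followed by
connection edges. -/
noncomputable def W2Ideal (IG : IdealFamily k G) (g : G.V) (d : H.V) : Submodule k (W2Sp k G H Γ g d) :=
  Submodule.span k {w | ∃ (g' : G.V) (x : PathSpace k G g g') (γ : Γ g' d),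
    x ∈ IG g g' ∧ w = Pi.single g' (x ⊗ₜ[k] γ)}

variable (U : Connection k G H Γ)

/-- A connection between bound quivers `(G, I_G)` and `(H, I_H)` is ideally connected if the
iterated connection maps carry linear combinations of paths lying in `I_G` composed with a
connection edge to linear combinations of a connection edge composed with paths lying in
`I_H`, and vice versa for the inverse maps. -/
def IsIdeallyConnected (IG : IdealFamily k G) (IH : IdealFamily k H) : Prop :=
  (∀ (a b : G.V) (c : H.V) (x : PathSpace k G a b), x ∈ IG a b → ∀ γ : Γ b c,
    transportLF k G H Γ U a b c x (incl0 k G H Γ b c γ) ∈ WIdeal k G H Γ IH a c) ∧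
  (∀ (g : G.V) (c d : H.V) (y : PathSpace k H c d), y ∈ IH c d → ∀ γ : Γ g c,
    transportLB k G H Γ U g c d y (incl2 k G H Γ g c γ) ∈ W2Ideal k G H Γ IG g d)

end IdeallyConnected

/-! Moving one arrow of `G` across the connection turns a connection edge into a combination of
connection edges followed by exactly one arrow of `H`, and dually for `U⁻¹`. Hence transport
along a path of length `ℓ` maps `Γ ⊗ I_m` into `Γ ⊗ I_{m+ℓ}`, where `I_m` is spanned by the paths
of length at least `m`, and `γ ⊗ 1 ∈ Γ ⊗ I_0` transported along a path of length `ℓ ≥ n` lands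
in `Γ ⊗ I_n`. -/

section LengthIdeal

variable {k} {Q : Quiv}

theorem lengthIdeal_eq_supported (n : ℕ) (a b : Q.V) :
    lengthIdeal k Q n a b = Finsupp.supported k k {p : Quiver.Path a b | n ≤ p.length} := by
  rw [Finsupp.supported_eq_span_single, lengthIdeal]
  congr 1
  ext x
  simp [eq_comm]

theorem le_length_of_mem_lengthIdeal {n : ℕ} {a b : Q.V} {x : PathSpace k Q a b}
    (hx : x ∈ lengthIdeal k Q n a b) {p : Quiver.Path a b} (hp : x p ≠ 0) : n ≤ p.length := by
  rw [lengthIdeal_eq_supported, Finsupp.mem_supported] at hx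
  exact hx (Finsupp.mem_support_iff.mpr hp)

theorem nil_mem_lengthIdeal_zero (a : Q.V) :
    Finsupp.single Quiver.Path.nil 1 ∈ lengthIdeal k Q 0 a a := by
  rw [lengthIdeal_eq_supported]
  exact Finsupp.single_mem_supported k 1 (Nat.zero_le _)

theorem lengthIdeal_antitone : Antitone (lengthIdeal k Q) := fun m n h a b => by
  simp only [lengthIdeal_eq_supported]
  exact Finsupp.supported_mono fun p hp => h.trans hp

theorem mapDomain_mem_lengthIdeal {m m' : ℕ} {a b a' b' : Q.V}
    {φ : Quiver.Path a b → Quiver.Path a' b'} (hφ : ∀ p, m ≤ p.length → m' ≤ (φ p).length)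
    {x : PathSpace k Q a b} (hx : x ∈ lengthIdeal k Q m a b) :
    Finsupp.mapDomain φ x ∈ lengthIdeal k Q m' a' b' := by
  rw [lengthIdeal_eq_supported] at hx ⊢
  exact Finsupp.supported_comap_lmapDomain k k φ _ (Finsupp.supported_mono hφ hx)

theorem consMapF_apply {a b c : Q.V} (f : EdgeSpace k Q a b) (y : PathSpace k Q b c) :
    consMapF k Q a b c f y =
      f.sum fun e r => r • Finsupp.mapDomain ((Quiver.Hom.toPath e).comp ·) y := by
  simp [consMapF, LinearMap.finsupp_sum_apply]

theorem consMapB_apply {a b c : Q.V} (f : EdgeSpace k Q b c) (x : PathSpace k Q a b) :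
    consMapB k Q a b c f x = f.sum fun e r => r • Finsupp.mapDomain (·.cons e) x := by
  simp [consMapB, LinearMap.finsupp_sum_apply]

theorem consMapF_mem_lengthIdeal {m : ℕ} {a b c : Q.V} (f : EdgeSpace k Q a b)
    {y : PathSpace k Q b c} (hy : y ∈ lengthIdeal k Q m b c) :
    consMapF k Q a b c f y ∈ lengthIdeal k Q (m + 1) a c := by
  rw [consMapF_apply]
  refine Submodule.finsuppSum_mem k _ f _ fun e _ =>
    Submodule.smul_mem _ _ (mapDomain_mem_lengthIdeal (fun p hp => ?_) hy)
  simp [Quiver.Hom.toPath]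
  omega

theorem consMapB_mem_lengthIdeal {m : ℕ} {a b c : Q.V} (f : EdgeSpace k Q b c)
    {x : PathSpace k Q a b} (hx : x ∈ lengthIdeal k Q m a b) :
    consMapB k Q a b c f x ∈ lengthIdeal k Q (m + 1) a c := by
  rw [consMapB_apply]
  exact Submodule.finsuppSum_mem k _ f _ fun e _ =>
    Submodule.smul_mem _ _ (mapDomain_mem_lengthIdeal (fun p hp => by simpa using hp) hx)

end LengthIdeal

section Transport

variable {k} {G H : Quiv} {Γ : G.V → H.V → Type*}
  [∀ g h, AddCommGroup (Γ g h)] [∀ g h, Module k (Γ g h)]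

theorem single_tmul_mem_WIdeal {I : IdealFamily k H} {a : G.V} {h' c : H.V} (γ : Γ a h')
    {y : PathSpace k H h' c} (hy : y ∈ I h' c) :
    Pi.single h' (γ ⊗ₜ[k] y) ∈ WIdeal k G H Γ I a c :=
  Submodule.subset_span ⟨h', γ, y, hy, rfl⟩

theorem single_tmul_mem_W2Ideal {I : IdealFamily k G} {g g' : G.V} {d : H.V}
    {x : PathSpace k G g g'} (hx : x ∈ I g g') (γ : Γ g' d) :
    Pi.single g' (x ⊗ₜ[k] γ) ∈ W2Ideal k G H Γ I g d :=
  Submodule.subset_span ⟨g', x, γ, hx, rfl⟩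

theorem WIdeal_mono {I I' : IdealFamily k H} (hI : I ≤ I') {a : G.V} {c : H.V} :
    WIdeal k G H Γ I a c ≤ WIdeal k G H Γ I' a c :=
  Submodule.span_mono fun _ ⟨h', γ, y, hy, hw⟩ => ⟨h', γ, y, hI _ _ hy, hw⟩

theorem W2Ideal_mono {I I' : IdealFamily k G} (hI : I ≤ I') {g : G.V} {d : H.V} :
    W2Ideal k G H Γ I g d ≤ W2Ideal k G H Γ I' g d :=
  Submodule.span_mono fun _ ⟨g', x, γ, hx, hw⟩ => ⟨g', x, γ, hI _ _ hx, hw⟩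

theorem incl0_eq_single {g : G.V} {h : H.V} (γ : Γ g h) :
    incl0 k G H Γ g h γ = Pi.single h (γ ⊗ₜ[k] Finsupp.single Quiver.Path.nil 1) := by
  funext h'
  rcases eq_or_ne h' h with rfl | hne
  · simp [incl0]
  · simp [incl0, hne]

theorem incl2_eq_single {g : G.V} {h : H.V} (γ : Γ g h) :
    incl2 k G H Γ g h γ = Pi.single g ((Finsupp.single Quiver.Path.nil 1) ⊗ₜ[k] γ) := by
  funext g'
  rcases eq_or_ne g' g with rfl | hne
  · simp [incl2]
  · simp [incl2, hne]

theorem incl0_mem_WIdeal {g : G.V} {h : H.V} (γ : Γ g h) :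
    incl0 k G H Γ g h γ ∈ WIdeal k G H Γ (lengthIdeal k H 0) g h :=
  incl0_eq_single (k := k) γ ▸ single_tmul_mem_WIdeal γ (nil_mem_lengthIdeal_zero h)

theorem incl2_mem_W2Ideal {g : G.V} {h : H.V} (γ : Γ g h) :
    incl2 k G H Γ g h γ ∈ W2Ideal k G H Γ (lengthIdeal k G 0) g h :=
  incl2_eq_single (k := k) γ ▸ single_tmul_mem_W2Ideal (nil_mem_lengthIdeal_zero g) γ

theorem attachF_tmul {gg : G.V} {h' h'' h : H.V} (γ : Γ gg h') (f : EdgeSpace k H h' h'')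
    (y : PathSpace k H h'' h) :
    attachF k G H Γ gg h' h'' h (γ ⊗ₜ f) y = γ ⊗ₜ consMapF k H h' h'' h f y := by
  simp [attachF]

theorem attachB_tmul {g g' g'' : G.V} {hh : H.V} (f : EdgeSpace k G g' g'') (γ : Γ g'' hh)
    (x : PathSpace k G g g') :
    attachB k G H Γ g g' g'' hh (f ⊗ₜ γ) x = consMapB k G g g' g'' f x ⊗ₜ γ := by
  simp [attachB]

theorem single_attachF_mem_WIdeal {m : ℕ} {gg : G.V} {h' h'' h : H.V}
    (t : Γ gg h' ⊗[k] EdgeSpace k H h' h'') {y : PathSpace k H h'' h}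
    (hy : y ∈ lengthIdeal k H m h'' h) :
    Pi.single h' (attachF k G H Γ gg h' h'' h t y) ∈
      WIdeal k G H Γ (lengthIdeal k H (m + 1)) gg h := by
  induction t using TensorProduct.induction_on with
  | zero => simp
  | tmul γ f =>
      exact attachF_tmul γ f y ▸ single_tmul_mem_WIdeal γ (consMapF_mem_lengthIdeal f hy)
  | add u v hu hv =>
      rw [map_add, LinearMap.add_apply, Pi.single_add]
      exact Submodule.add_mem _ hu hv

theorem single_attachB_mem_W2Ideal {m : ℕ} {g g' g'' : G.V} {hh : H.V}
    (t : EdgeSpace k G g' g'' ⊗[k] Γ g'' hh) {x : PathSpace k G g g'}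
    (hx : x ∈ lengthIdeal k G m g g') :
    Pi.single g'' (attachB k G H Γ g g' g'' hh t x) ∈
      W2Ideal k G H Γ (lengthIdeal k G (m + 1)) g hh := by
  induction t using TensorProduct.induction_on with
  | zero => simp
  | tmul f γ =>
      exact attachB_tmul f γ x ▸ single_tmul_mem_W2Ideal (consMapB_mem_lengthIdeal f hx) γ
  | add u v hu hv =>
      rw [map_add, LinearMap.add_apply, Pi.single_add]
      exact Submodule.add_mem _ hu hv

variable (U : Connection k G H Γ)

theorem stepAuxF_tmul {c g' : G.V} (e : G.E c g') {h h'' : H.V} (γ : Γ g' h'')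
    (y : PathSpace k H h'' h) :
    stepAuxF k G H Γ U e h h'' (γ ⊗ₜ y) = fun h' =>
      attachF k G H Γ c h' h'' h (U c h'' (Pi.single g' (Finsupp.single e 1 ⊗ₜ γ)) h') y := by
  simp [stepAuxF, piHomSwap]
  rfl

theorem stepAuxB_tmul {c d : H.V} (e : H.E c d) {g g' : G.V} (x : PathSpace k G g g')
    (γ : Γ g' c) :
    stepAuxB k G H Γ U e g g' (x ⊗ₜ γ) = fun g'' =>
      attachB k G H Γ g g' g'' d
        ((U g' d).symm (Pi.single c (γ ⊗ₜ Finsupp.single e 1)) g'') x := by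
  simp [stepAuxB, piHomSwap]
  rfl

theorem stepF_single {c g' : G.V} (e : G.E c g') {h h'' : H.V}
    (t : Γ g' h'' ⊗[k] PathSpace k H h'' h) :
    stepF k G H Γ U e h (Pi.single h'' t) = stepAuxF k G H Γ U e h h'' t := by
  rw [stepF, LinearMap.sum_apply, Finset.sum_eq_single h'']
  · simp
  · intro b _ hb
    simp [Pi.single_eq_of_ne hb]
  · simp

theorem stepB_single {c d : H.V} (e : H.E c d) {g g' : G.V}
    (t : PathSpace k G g g' ⊗[k] Γ g' c) :
    stepB k G H Γ U e g (Pi.single g' t) = stepAuxB k G H Γ U e g g' t := by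
  rw [stepB, LinearMap.sum_apply, Finset.sum_eq_single g']
  · simp
  · intro b _ hb
    simp [Pi.single_eq_of_ne hb]
  · simp

theorem stepF_mem_WIdeal {m : ℕ} {c g' : G.V} (e : G.E c g') {h : H.V}
    {w : WSp k G H Γ g' h} (hw : w ∈ WIdeal k G H Γ (lengthIdeal k H m) g' h) :
    stepF k G H Γ U e h w ∈ WIdeal k G H Γ (lengthIdeal k H (m + 1)) c h := by
  refine (Submodule.span_le (p := (WIdeal k G H Γ (lengthIdeal k H (m + 1)) c h).comap
    (stepF k G H Γ U e h))).mpr ?_ hw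
  rintro _ ⟨h'', γ, y, hy, rfl⟩
  rw [SetLike.mem_coe, Submodule.mem_comap, stepF_single, stepAuxF_tmul,
    ← Finset.univ_sum_single (fun h' => attachF k G H Γ c h' h'' h _ y)]
  exact Submodule.sum_mem _ fun h' _ => single_attachF_mem_WIdeal _ hy

theorem stepB_mem_W2Ideal {m : ℕ} {c d : H.V} (e : H.E c d) {g : G.V}
    {w : W2Sp k G H Γ g c} (hw : w ∈ W2Ideal k G H Γ (lengthIdeal k G m) g c) :
    stepB k G H Γ U e g w ∈ W2Ideal k G H Γ (lengthIdeal k G (m + 1)) g d := by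
  refine (Submodule.span_le (p := (W2Ideal k G H Γ (lengthIdeal k G (m + 1)) g d).comap
    (stepB k G H Γ U e g))).mpr ?_ hw
  rintro _ ⟨g', x, γ, hx, rfl⟩
  rw [SetLike.mem_coe, Submodule.mem_comap, stepB_single, stepAuxB_tmul,
    ← Finset.univ_sum_single (fun g'' => attachB k G H Γ g g' g'' d _ x)]
  exact Submodule.sum_mem _ fun g'' _ => single_attachB_mem_W2Ideal _ hx

theorem transportF_mem_WIdeal {g : G.V} {h : H.V} {c : G.V} (p : Quiver.Path g c) {m : ℕ}
    {w : WSp k G H Γ c h} (hw : w ∈ WIdeal k G H Γ (lengthIdeal k H m) c h) :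
    transportF k G H Γ U g h p w ∈ WIdeal k G H Γ (lengthIdeal k H (m + p.length)) g h := by
  induction p generalizing m with
  | nil => simpa [transportF] using hw
  | cons p e ih =>
      rw [Quiver.Path.length_cons, ← add_assoc, add_right_comm]
      exact ih (stepF_mem_WIdeal U e hw)

theorem transportB_mem_W2Ideal {g : G.V} {c d : H.V} (p : Quiver.Path c d) {m : ℕ}
    {w : W2Sp k G H Γ g c} (hw : w ∈ W2Ideal k G H Γ (lengthIdeal k G m) g c) :
    transportB k G H Γ U g c p w ∈ W2Ideal k G H Γ (lengthIdeal k G (m + p.length)) g d := by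
  induction p with
  | nil => simpa [transportB] using hw
  | cons p e ih => exact stepB_mem_W2Ideal U e ih

theorem transportLF_apply {a b : G.V} {c : H.V} (x : PathSpace k G a b) (w : WSp k G H Γ b c) :
    transportLF k G H Γ U a b c x w = x.sum fun p r => r • transportF k G H Γ U a c p w := by
  simp [transportLF, LinearMap.finsupp_sum_apply]

theorem transportLB_apply {g : G.V} {c d : H.V} (y : PathSpace k H c d) (w : W2Sp k G H Γ g c) :
    transportLB k G H Γ U g c d y w = y.sum fun p r => r • transportB k G H Γ U g c p w := by
  simp [transportLB, LinearMap.finsupp_sum_apply]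

theorem transportLF_mem_WIdeal {a b : G.V} {c : H.V} {m m' : ℕ} {x : PathSpace k G a b}
    (hx : x ∈ lengthIdeal k G m a b) {w : WSp k G H Γ b c}
    (hw : w ∈ WIdeal k G H Γ (lengthIdeal k H m') b c) :
    transportLF k G H Γ U a b c x w ∈ WIdeal k G H Γ (lengthIdeal k H (m' + m)) a c := by
  rw [transportLF_apply]
  refine Submodule.finsuppSum_mem k _ x _ fun p hp => Submodule.smul_mem _ _ ?_
  have hle : m' + m ≤ m' + p.length := Nat.add_le_add_left (le_length_of_mem_lengthIdeal hx hp) m'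
  exact WIdeal_mono (lengthIdeal_antitone hle) (transportF_mem_WIdeal U p hw)

theorem transportLB_mem_W2Ideal {g : G.V} {c d : H.V} {m m' : ℕ} {y : PathSpace k H c d}
    (hy : y ∈ lengthIdeal k H m c d) {w : W2Sp k G H Γ g c}
    (hw : w ∈ W2Ideal k G H Γ (lengthIdeal k G m') g c) :
    transportLB k G H Γ U g c d y w ∈ W2Ideal k G H Γ (lengthIdeal k G (m' + m)) g d := by
  rw [transportLB_apply]
  refine Submodule.finsuppSum_mem k _ y _ fun p hp => Submodule.smul_mem _ _ ?_
  have hle : m' + m ≤ m' + p.length := Nat.add_le_add_left (le_length_of_mem_lengthIdeal hy hp) m'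
  exact W2Ideal_mono (lengthIdeal_antitone hle) (transportB_mem_W2Ideal U p hw)

end Transport

theorem truncated_ideals_every_connection_ideally_connected
    (P Q : Quiv) (n : ℕ)
    (Γ : P.V → Q.V → Type*) [∀ g h, AddCommGroup (Γ g h)] [∀ g h, Module k (Γ g h)]
    (U : Connection k P Q Γ) :
    IsIdeallyConnected k P Q Γ U (lengthIdeal k P n) (lengthIdeal k Q n) := by
  refine ⟨fun _ _ _ _ hx γ => ?_, fun _ _ _ _ hy γ => ?_⟩
  · simpa using transportLF_mem_WIdeal U hx (incl0_mem_WIdeal γ)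
  · simpa using transportLB_mem_W2Ideal U hy (incl2_mem_W2Ideal γ)
end
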